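/- arXiv:0911.5107 — 4 statements merged into one kernel-verified Lean document; each statement's English description precedes it below -/
import Mathlib

section
/- Let Υ be an invertible D×D real matrix, K an invertible N×N real matrix, and K_* an M×N real matrix. Then (Υ ⊗ K_*) (Υ ⊗ K)⁻¹ = I_D ⊗ (K_* K⁻¹). Consequently, for any y ∈ ℝ^{DN} partitioned into blocks y_1,…,y_D ∈ ℝ^N, the d-th block of the noise-free intrinsic coregionalization model predictive mean (Υ ⊗ K_*)(Υ ⊗ K)⁻¹ y equals K_* K⁻¹ y_d, i.e. it depends only on the observations of output d (autokrigeability / cancellation of inter-task transfer). -/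
open Matrix Kronecker

namespace Matrix

variable {l m n p α : Type*}

theorem one_kronecker_mulVec_apply [Semiring α] [Fintype l] [DecidableEq l] [Fintype n]
    (A : Matrix m n α) (y : l × n → α) (i : l) (j : m) :
    (((1 : Matrix l l α) ⊗ₖ A) *ᵥ y) (i, j) = (A *ᵥ fun k => y (i, k)) j := by
  rw [show y = vec (of fun k i => y (i, k)) from rfl, ← vec_mul_eq_mulVec]
  rfl

theorem kronecker_mul_inv_kronecker_of_isUnit_det [CommRing α] [Fintype m] [DecidableEq m]
    [Fintype n] [DecidableEq n] (A : Matrix m m α) (B : Matrix p n α) (C : Matrix n n α)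
    (hA : IsUnit A.det) : A ⊗ₖ B * (A ⊗ₖ C)⁻¹ = 1 ⊗ₖ (B * C⁻¹) := by
  rw [inv_kronecker, ← mul_kronecker_mul, mul_nonsing_inv _ hA]

end Matrix

theorem icm_autokrigeability_general {D N M : ℕ}
    (Υ : Matrix (Fin D) (Fin D) ℝ) (K : Matrix (Fin N) (Fin N) ℝ)
    (Kstar : Matrix (Fin M) (Fin N) ℝ)
    (hΥ : IsUnit Υ.det) :
    (Υ ⊗ₖ Kstar) * (Υ ⊗ₖ K)⁻¹ =
        (1 : Matrix (Fin D) (Fin D) ℝ) ⊗ₖ (Kstar * K⁻¹) ∧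
      ∀ (y : Fin D × Fin N → ℝ) (d : Fin D) (m : Fin M),
        (((Υ ⊗ₖ Kstar) * (Υ ⊗ₖ K)⁻¹) *ᵥ y) (d, m) =
          ((Kstar * K⁻¹) *ᵥ fun n => y (d, n)) m := by
  have hcancel := kronecker_mul_inv_kronecker_of_isUnit_det Υ Kstar K hΥ
  refine ⟨hcancel, fun y d m => ?_⟩
  rw [hcancel, one_kronecker_mulVec_apply]

/-- Autokrigeability / cancellation of inter-task transfer in the noise-free intrinsic
coregionalization model: `(Υ ⊗ K_*)(Υ ⊗ K)⁻¹ = I_D ⊗ (K_* K⁻¹)`, and hence the `d`-th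
block of the predictive mean `(Υ ⊗ K_*)(Υ ⊗ K)⁻¹ y` equals `K_* K⁻¹ y_d`, depending
only on the observations of output `d`. -/
theorem icm_autokrigeability {D N M : ℕ}
    (Υ : Matrix (Fin D) (Fin D) ℝ) (K : Matrix (Fin N) (Fin N) ℝ)
    (Kstar : Matrix (Fin M) (Fin N) ℝ)
    (hΥ : IsUnit Υ.det) (hK : IsUnit K.det) :
    (Υ ⊗ₖ Kstar) * (Υ ⊗ₖ K)⁻¹ =
        (1 : Matrix (Fin D) (Fin D) ℝ) ⊗ₖ (Kstar * K⁻¹) ∧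
      ∀ (y : Fin D × Fin N → ℝ) (d : Fin D) (m : Fin M),
        (((Υ ⊗ₖ Kstar) * (Υ ⊗ₖ K)⁻¹) *ᵥ y) (d, m) =
          ((Kstar * K⁻¹) *ᵥ fun n => y (d, n)) m :=
  icm_autokrigeability_general Υ K Kstar hΥ
end

section
/- Let ℓ > 0, γ > 0, S ∈ ℝ and t, t' ∈ ℝ. Then S ∫_0^t exp(−γ(t − τ)) exp(−(τ − t')²/ℓ²) dτ = (S √π ℓ / 2) · exp((γℓ/2)²) · exp(−γ(t − t')) · [erf(t'/ℓ + γℓ/2) − erf((t' − t)/ℓ + γℓ/2)]. (This is the closed form of the cross-covariance k_{f_d,u_q}(t,t') between an output of the first-order differential equation model and the latent function with squared exponential covariance exp(−(t−t')²/ℓ²).) -/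
/-!
Completing the square in the exponent turns the integrand into a constant times the Gaussian
`exp (-(d - τ / ℓ) ^ 2)` with `d = t' / ℓ + γ ℓ / 2`; the substitution `x = d - τ / ℓ` then turns
the integral into `ℓ ∫ exp (-x ^ 2)` over `[d - t / ℓ, d]`, a difference of two values of `erf`.
-/

open Real intervalIntegral

/-- The error function `erf(z) = (2/√π) ∫_0^z exp(−ξ²) dξ`. -/
noncomputable def erf (z : ℝ) : ℝ :=
  (2 / Real.sqrt π) * ∫ ξ in (0 : ℝ)..z, Real.exp (-ξ ^ 2)

theorem erf_sub_erf (a b : ℝ) :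
    erf b - erf a = 2 / √π * ∫ x in a..b, exp (-x ^ 2) := by
  have hint (u v : ℝ) : IntervalIntegrable (fun x => exp (-x ^ 2)) MeasureTheory.volume u v :=
    (continuous_exp.comp (continuous_pow 2).neg).intervalIntegrable u v
  rw [erf, erf, ← mul_sub, integral_interval_sub_left (hint 0 b) (hint 0 a)]

theorem exp_mul_exp_eq_exp_sq_mul_gaussian {ℓ : ℝ} (hℓ : ℓ ≠ 0) (γ t t' τ : ℝ) :
    exp (-γ * (t - τ)) * exp (-(τ - t') ^ 2 / ℓ ^ 2) =
      exp ((γ * ℓ / 2) ^ 2) * exp (-γ * (t - t')) *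
        exp (-(t' / ℓ + γ * ℓ / 2 - τ / ℓ) ^ 2) := by
  rw [← exp_add, ← exp_add, ← exp_add]
  congr 1
  field_simp
  ring

theorem ode_cross_covariance_general (ℓ γ : ℝ) (hℓ : 0 < ℓ)
    (S t t' : ℝ) :
    S * ∫ τ in (0 : ℝ)..t, Real.exp (-γ * (t - τ)) * Real.exp (-(τ - t') ^ 2 / ℓ ^ 2) =
      (S * Real.sqrt π * ℓ / 2) * Real.exp ((γ * ℓ / 2) ^ 2) *
        Real.exp (-γ * (t - t')) *
        (erf (t' / ℓ + γ * ℓ / 2) - erf ((t' - t) / ℓ + γ * ℓ / 2)) := by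
  have hπ : √π ≠ 0 := (sqrt_pos.mpr pi_pos).ne'
  have hlower : t' / ℓ + γ * ℓ / 2 - t / ℓ = (t' - t) / ℓ + γ * ℓ / 2 := by ring
  simp only [exp_mul_exp_eq_exp_sq_mul_gaussian hℓ.ne', integral_const_mul,
    integral_comp_sub_div (fun x => exp (-x ^ 2)) hℓ.ne', zero_div, sub_zero, hlower,
    erf_sub_erf, smul_eq_mul]
  field_simp

/-- Closed form of the cross-covariance `k_{f_d,u_q}(t,t')` between an output of the
first-order ODE model and a latent function with squared exponential covariance:
`S ∫_0^t e^{−γ(t−τ)} e^{−(τ−t')²/ℓ²} dτ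
  = (S√π ℓ/2) e^{(γℓ/2)²} e^{−γ(t−t')} [erf(t'/ℓ + γℓ/2) − erf((t'−t)/ℓ + γℓ/2)]`. -/
theorem ode_cross_covariance (ℓ γ : ℝ) (hℓ : 0 < ℓ) (hγ : 0 < γ)
    (S t t' : ℝ) :
    S * ∫ τ in (0 : ℝ)..t, Real.exp (-γ * (t - τ)) * Real.exp (-(τ - t') ^ 2 / ℓ ^ 2) =
      (S * Real.sqrt π * ℓ / 2) * Real.exp ((γ * ℓ / 2) ^ 2) *
        Real.exp (-γ * (t - t')) *
        (erf (t' / ℓ + γ * ℓ / 2) - erf ((t' - t) / ℓ + γ * ℓ / 2)) :=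
  ode_cross_covariance_general ℓ γ hℓ S t t'
end

section
/- Let ℓ > 0 and γ_d, γ_{d'} > 0, and for γ, γ' > 0 and s, s' ∈ ℝ define H(γ, s, s') := erf(s/ℓ + γℓ/2) − erf((s − s')/ℓ + γℓ/2) and h(γ, γ', s, s') := (exp((γℓ/2)²)/(γ + γ')) · [exp((γ + γ') s) · H(γ, s, s') − H(γ, 0, s')]. Then for all t, t' ≥ 0 and S_{d}, S_{d'} ∈ ℝ, S_d S_{d'} (√π ℓ / 2) · exp(−γ_d t − γ_{d'} t') · [h(γ_{d'}, γ_d, t, t') + h(γ_d, γ_{d'}, t', t)] = S_d S_{d'} exp(−γ_d t − γ_{d'} t') ∫_0^t exp(γ_d τ) ∫_0^{t'} exp(γ_{d'} τ') exp(−(τ − τ')²/ℓ²) dτ' dτ. (This is the closed form of the output covariance k_{f_d,f_{d'}}(t,t') for the first-order differential equation model with squared exponential latent covariance exp(−(τ−τ')²/ℓ²).) -/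
open Real intervalIntegral

/-- `H(γ, s, s') = erf(s/ℓ + γℓ/2) − erf((s − s')/ℓ + γℓ/2)`. -/
noncomputable def Hfun (ℓ γ s s' : ℝ) : ℝ :=
  erf (s / ℓ + γ * ℓ / 2) - erf ((s - s') / ℓ + γ * ℓ / 2)

/-- `h(γ, γ', s, s') = (e^{(γℓ/2)²}/(γ+γ')) [e^{(γ+γ')s} H(γ,s,s') − H(γ,0,s')]`. -/
noncomputable def hfun (ℓ γ γ' s s' : ℝ) : ℝ :=
  (Real.exp ((γ * ℓ / 2) ^ 2) / (γ + γ')) *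
    (Real.exp ((γ + γ') * s) * Hfun ℓ γ s s' - Hfun ℓ γ 0 s')

/-! The inner integral is an erf difference after completing the square in the exponent:
`∫₀^{t'} e^{γ'τ'} e^{-(τ-τ')²/ℓ²} dτ' = (√π ℓ/2) e^{(γ'ℓ/2)²} e^{γ'τ} H(γ', τ, t')`.
For the outer integral, `s ↦ h(γ', γ, s, t') + h(γ, γ', t', s)` vanishes at `s = 0` and has
derivative `e^{(γ'ℓ/2)²} e^{(γ+γ')s} H(γ', s, t')`, so the fundamental theorem of calculus
finishes the computation. -/

lemma hasDerivAt_erf (z : ℝ) : HasDerivAt erf (2 / √π * exp (-z ^ 2)) z := by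
  have hc : Continuous fun ξ : ℝ => exp (-ξ ^ 2) := by fun_prop
  exact (integral_hasDerivAt_right (hc.intervalIntegrable 0 z)
    hc.stronglyMeasurable.stronglyMeasurableAtFilter hc.continuousAt).const_mul _

lemma HasDerivAt.erf {f : ℝ → ℝ} {f' x : ℝ} (hf : HasDerivAt f f' x) :
    HasDerivAt (fun y => erf (f y)) (2 / √π * Real.exp (-f x ^ 2) * f') x :=
  (hasDerivAt_erf (f x)).comp x hf

@[fun_prop]
lemma continuous_erf : Continuous erf :=
  continuous_iff_continuousAt.mpr fun z => (hasDerivAt_erf z).continuousAt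

lemma Hfun_zero_right (ℓ γ s : ℝ) : Hfun ℓ γ s 0 = 0 := by
  simp [Hfun]

lemma hfun_zero_left (ℓ γ γ' s' : ℝ) : hfun ℓ γ γ' 0 s' = 0 := by
  simp [hfun]

lemma hfun_zero_right (ℓ γ γ' s : ℝ) : hfun ℓ γ γ' s 0 = 0 := by
  simp [hfun, Hfun_zero_right]

lemma hasDerivAt_Hfun_left (ℓ γ s s' : ℝ) :
    HasDerivAt (fun s => Hfun ℓ γ s s')
      (2 / √π * (exp (-(s / ℓ + γ * ℓ / 2) ^ 2) - exp (-((s - s') / ℓ + γ * ℓ / 2) ^ 2)) / ℓ)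
      s := by
  have h₁ := HasDerivAt.erf (((hasDerivAt_id' s).div_const ℓ).add_const (γ * ℓ / 2))
  have h₂ := HasDerivAt.erf (((hasDerivAt_id' s).sub_const s').div_const ℓ |>.add_const (γ * ℓ / 2))
  exact (h₁.sub h₂).congr_deriv (by ring)

lemma hasDerivAt_Hfun_right (ℓ γ s s' : ℝ) :
    HasDerivAt (fun s' => Hfun ℓ γ s s') (2 / √π * exp (-((s - s') / ℓ + γ * ℓ / 2) ^ 2) / ℓ)
      s' := by
  have h := HasDerivAt.erf (((hasDerivAt_id' s').const_sub s).div_const ℓ |>.add_const (γ * ℓ / 2))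
  exact (h.const_sub (erf (s / ℓ + γ * ℓ / 2))).congr_deriv (by ring)

lemma integral_exp_mul_exp_neg_sq_div_sq {ℓ : ℝ} (hℓ : ℓ ≠ 0) (γ τ t' : ℝ) :
    ∫ τ' in (0 : ℝ)..t', exp (γ * τ') * exp (-(τ - τ') ^ 2 / ℓ ^ 2) =
      √π * ℓ / 2 * exp ((γ * ℓ / 2) ^ 2) * exp (γ * τ) * Hfun ℓ γ τ t' := by
  have hπ : √π ≠ 0 := (sqrt_pos.mpr pi_pos).ne'
  have hderiv : ∀ x, HasDerivAt
      (fun s' => √π * ℓ / 2 * exp ((γ * ℓ / 2) ^ 2) * exp (γ * τ) * Hfun ℓ γ τ s')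
      (exp (γ * x) * exp (-(τ - x) ^ 2 / ℓ ^ 2)) x := by
    intro x
    refine ((hasDerivAt_Hfun_right ℓ γ τ x).const_mul _).congr_deriv ?_
    calc _ = exp ((γ * ℓ / 2) ^ 2 + γ * τ + -((τ - x) / ℓ + γ * ℓ / 2) ^ 2) := by
          rw [exp_add, exp_add]; field_simp
      _ = exp (γ * x + -(τ - x) ^ 2 / ℓ ^ 2) := by congr 1; field_simp; ring
      _ = _ := exp_add _ _
  rw [integral_eq_sub_of_hasDerivAt (fun x _ => hderiv x)
    ((by fun_prop : Continuous _).intervalIntegrable _ _), Hfun_zero_right]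
  ring

lemma hasDerivAt_hfun_add_hfun {ℓ : ℝ} (hℓ : ℓ ≠ 0) {γ γ' : ℝ} (hγ : γ + γ' ≠ 0) (t' x : ℝ) :
    HasDerivAt (fun s => hfun ℓ γ' γ s t' + hfun ℓ γ γ' t' s)
      (exp ((γ' * ℓ / 2) ^ 2) * exp ((γ' + γ) * x) * Hfun ℓ γ' x t') x := by
  have hπ : √π ≠ 0 := (sqrt_pos.mpr pi_pos).ne'
  have he : HasDerivAt (fun s => exp ((γ' + γ) * s)) (exp ((γ' + γ) * x) * ((γ' + γ) * 1)) x :=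
    ((hasDerivAt_id' x).const_mul _).exp
  have h₁ := ((he.mul (hasDerivAt_Hfun_left ℓ γ' x t')).sub_const (Hfun ℓ γ' 0 t')).const_mul
    (exp ((γ' * ℓ / 2) ^ 2) / (γ' + γ))
  have h₂ := (((hasDerivAt_Hfun_right ℓ γ t' x).const_mul (exp ((γ + γ') * t'))).sub
    (hasDerivAt_Hfun_right ℓ γ 0 x)).const_mul (exp ((γ * ℓ / 2) ^ 2) / (γ + γ'))
  refine (h₁.add h₂).congr_deriv ?_
  -- the erf-derivative terms of the two summands cancel, by completing the square
  have hid₁ : exp ((γ' * ℓ / 2) ^ 2) * exp ((γ' + γ) * x) * exp (-(x / ℓ + γ' * ℓ / 2) ^ 2) =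
      exp ((γ * ℓ / 2) ^ 2) * exp (-((0 - x) / ℓ + γ * ℓ / 2) ^ 2) := by
    simp only [← exp_add]; congr 1; field_simp; ring
  have hid₂ : exp ((γ' * ℓ / 2) ^ 2) * exp ((γ' + γ) * x) *
        exp (-((x - t') / ℓ + γ' * ℓ / 2) ^ 2) =
      exp ((γ * ℓ / 2) ^ 2) * exp ((γ + γ') * t') * exp (-((t' - x) / ℓ + γ * ℓ / 2) ^ 2) := by
    simp only [← exp_add]; congr 1; field_simp; ring
  rw [add_comm γ' γ] at hid₁ hid₂ ⊢
  set E₁ := exp (-(x / ℓ + γ' * ℓ / 2) ^ 2)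
  set E₂ := exp (-((x - t') / ℓ + γ' * ℓ / 2) ^ 2)
  set E₃ := exp (-((t' - x) / ℓ + γ * ℓ / 2) ^ 2)
  set E₄ := exp (-((0 - x) / ℓ + γ * ℓ / 2) ^ 2)
  set A := exp ((γ * ℓ / 2) ^ 2)
  set A' := exp ((γ' * ℓ / 2) ^ 2)
  field_simp
  linear_combination 2 * hid₁ - 2 * hid₂

lemma integral_exp_mul_integral_exp_mul_exp_neg_sq_div_sq {ℓ : ℝ} (hℓ : ℓ ≠ 0) {γ γ' : ℝ}
    (hγ : γ + γ' ≠ 0) (t t' : ℝ) :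
    ∫ τ in (0 : ℝ)..t, exp (γ * τ) *
        ∫ τ' in (0 : ℝ)..t', exp (γ' * τ') * exp (-(τ - τ') ^ 2 / ℓ ^ 2) =
      √π * ℓ / 2 * (hfun ℓ γ' γ t t' + hfun ℓ γ γ' t' t) := by
  simp_rw [integral_exp_mul_exp_neg_sq_div_sq hℓ]
  have hderiv : ∀ x, HasDerivAt (fun s => √π * ℓ / 2 * (hfun ℓ γ' γ s t' + hfun ℓ γ γ' t' s))
      (exp (γ * x) * (√π * ℓ / 2 * exp ((γ' * ℓ / 2) ^ 2) * exp (γ' * x) * Hfun ℓ γ' x t')) x :=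
    fun x => ((hasDerivAt_hfun_add_hfun hℓ hγ t' x).const_mul _).congr_deriv
      (by rw [add_mul, exp_add]; ring)
  rw [integral_eq_sub_of_hasDerivAt (fun x _ => hderiv x)
    ((by unfold Hfun; fun_prop : Continuous _).intervalIntegrable _ _),
    hfun_zero_left, hfun_zero_right]
  ring

theorem ode_output_covariance_general (ℓ γd γd' : ℝ) (hℓ : 0 < ℓ)
    (hγd : 0 < γd) (hγd' : 0 < γd')
    (t t' : ℝ) (Sd Sd' : ℝ) :
    Sd * Sd' * (Real.sqrt π * ℓ / 2) * Real.exp (-γd * t - γd' * t') *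
        (hfun ℓ γd' γd t t' + hfun ℓ γd γd' t' t) =
      Sd * Sd' * Real.exp (-γd * t - γd' * t') *
        ∫ τ in (0 : ℝ)..t, Real.exp (γd * τ) *
          ∫ τ' in (0 : ℝ)..t', Real.exp (γd' * τ') *
            Real.exp (-(τ - τ') ^ 2 / ℓ ^ 2) := by
  rw [integral_exp_mul_integral_exp_mul_exp_neg_sq_div_sq hℓ.ne' (by positivity)]
  ring

/-- Closed form of the output covariance `k_{f_d,f_{d'}}(t,t')` for the first-order
ODE model with squared exponential latent covariance. -/
theorem ode_output_covariance (ℓ γd γd' : ℝ) (hℓ : 0 < ℓ)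
    (hγd : 0 < γd) (hγd' : 0 < γd')
    (t t' : ℝ) (ht : 0 ≤ t) (ht' : 0 ≤ t') (Sd Sd' : ℝ) :
    Sd * Sd' * (Real.sqrt π * ℓ / 2) * Real.exp (-γd * t - γd' * t') *
        (hfun ℓ γd' γd t t' + hfun ℓ γd γd' t' t) =
      Sd * Sd' * Real.exp (-γd * t - γd' * t') *
        ∫ τ in (0 : ℝ)..t, Real.exp (γd * τ) *
          ∫ τ' in (0 : ℝ)..t', Real.exp (γd' * τ') *
            Real.exp (-(τ - τ') ^ 2 / ℓ ^ 2) :=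
  ode_output_covariance_general ℓ γd γd' hℓ hγd hγd' t t' Sd Sd'
end

section
/- Let K_{u,u} be a symmetric positive definite K×K real matrix, K_{f,f} a (DN)×(DN) real matrix indexed by pairs (d,n), and K_{f,u} a (DN)×K real matrix with K_{u,f} = K_{f,u}ᵀ, such that the block matrix [[K_{u,u}, K_{u,f}],[K_{f,u}, K_{f,f}]] is positive semidefinite. Let D_P := (K_{f,f} − K_{f,u} K_{u,u}⁻¹ K_{u,f}) ⊙ (I_D ⊗ 1_N) be the block-diagonal part of the Schur complement, where 1_N is the N×N all-ones matrix. Then the PITC approximate covariance matrix D_P + K_{f,u} K_{u,u}⁻¹ K_{u,f} is positive semidefinite, so it is a valid covariance matrix. -/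
open Matrix Kronecker
open scoped Matrix

/-! The Schur complement `K_{f,f} − K_{f,u} K_{u,u}⁻¹ K_{u,f}` of the PSD block matrix is PSD,
and masking it with `I_D ⊗ 1_N` keeps it PSD by the Schur product theorem, since the mask is a
Kronecker product of PSD matrices. The Nyström term `K_{f,u} K_{u,u}⁻¹ K_{f,u}ᵀ` is a congruence
of the PD matrix `K_{u,u}⁻¹`, so the sum is PSD. -/

namespace Matrix

variable {ι κ R : Type*} [Fintype ι] [Fintype κ]

theorem posSemidef_allOnes [CommRing R] [PartialOrder R] [StarRing R] [StarOrderedRing R] :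
    (of fun _ _ : ι => (1 : R)).PosSemidef := by
  simpa [vecMulVec] using posSemidef_vecMulVec_self_star (fun _ : ι => (1 : R))

theorem PosDef.posSemidef_schurComplement [Field R] [PartialOrder R] [StarRing R]
    [StarOrderedRing R] [DecidableEq ι] {A : Matrix ι ι R}
    {B : Matrix κ ι R} {D : Matrix κ κ R} (hA : A.PosDef)
    (h : (fromBlocks A Bᴴ B D).PosSemidef) : (D - B * A⁻¹ * Bᴴ).PosSemidef := by
  have := hA.isUnit.invertible
  simpa using (hA.fromBlocks₁₁ Bᴴ D).mp (by simpa using h)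

end Matrix

theorem pitc_covariance_posSemidef_general {K D N : ℕ}
    (Kuu : Matrix (Fin K) (Fin K) ℝ)
    (Kff : Matrix (Fin D × Fin N) (Fin D × Fin N) ℝ)
    (Kfu : Matrix (Fin D × Fin N) (Fin K) ℝ)
    (Kuf : Matrix (Fin K) (Fin D × Fin N) ℝ)
    (hKuu : Kuu.PosDef)
    (hKuf : Kuf = Kfuᵀ)
    (hblock : (Matrix.fromBlocks Kuu Kuf Kfu Kff).PosSemidef) :
    (((Kff - Kfu * Kuu⁻¹ * Kuf) ⊙ ((1 : Matrix (Fin D) (Fin D) ℝ) ⊗ₖ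
          (Matrix.of fun (_ _ : Fin N) => (1 : ℝ)))) +
        Kfu * Kuu⁻¹ * Kuf).PosSemidef := by
  subst hKuf
  rw [← conjTranspose_eq_transpose_of_trivial] at hblock ⊢
  have hSchur := hKuu.posSemidef_schurComplement hblock
  have hMask :=
    (PosSemidef.one (n := Fin D) (R := ℝ)).kronecker (posSemidef_allOnes (ι := Fin N))
  exact (hSchur.hadamard hMask).add (hKuu.inv.posSemidef.mul_mul_conjTranspose_same Kfu)

/-- The PITC approximate covariance `D_P + K_{f,u} K_{u,u}⁻¹ K_{u,f}` is positive
semidefinite, where `D_P` is the output-wise block-diagonal part of the Schur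
complement `K_{f,f} − K_{f,u} K_{u,u}⁻¹ K_{u,f}`. -/
theorem pitc_covariance_posSemidef {K D N : ℕ}
    (Kuu : Matrix (Fin K) (Fin K) ℝ)
    (Kff : Matrix (Fin D × Fin N) (Fin D × Fin N) ℝ)
    (Kfu : Matrix (Fin D × Fin N) (Fin K) ℝ)
    (Kuf : Matrix (Fin K) (Fin D × Fin N) ℝ)
    (hKuu : Kuu.PosDef) (hKuusymm : Kuu.IsSymm)
    (hKuf : Kuf = Kfuᵀ)
    (hblock : (Matrix.fromBlocks Kuu Kuf Kfu Kff).PosSemidef) :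
    (((Kff - Kfu * Kuu⁻¹ * Kuf) ⊙ ((1 : Matrix (Fin D) (Fin D) ℝ) ⊗ₖ
          (Matrix.of fun (_ _ : Fin N) => (1 : ℝ)))) +
        Kfu * Kuu⁻¹ * Kuf).PosSemidef :=
  pitc_covariance_posSemidef_general Kuu Kff Kfu Kuf hKuu hKuf hblock
end
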